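/- If a finitely generated group G admits a surjective group homomorphism with finite kernel onto a finitely generated group Q with finite girth, then G has finite girth. -/

import Mathlib

/-! Let `N = U(Q)` and `K = ker f`. For a finite generating set `S` of `G`, the set
`f(S) \ {1}` generates `Q`, so it has a relator word of length at most `N`, and one of minimal
length is cyclically reduced. Lifting it letter by letter to `S ∪ S⁻¹` gives a cyclically reduced
word `w` whose value lies in `K`; hence `w^|K|` is a reduced relator word of length at most
`|K| N`, and `U(G,S) ≤ |K| N` for every `S`. -/

open Pointwise

/-- A nonempty reduced word in the letters `S ∪ S⁻¹` (no letter immediately followed by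
its inverse) that represents the identity element of the group. -/
def IsRelatorWord {G : Type*} [Group G] (S : Set G) (w : List G) : Prop :=
  w ≠ [] ∧ (∀ g ∈ w, g ∈ S ∨ g⁻¹ ∈ S) ∧ List.Chain' (fun a b => b ≠ a⁻¹) w ∧ w.prod = 1

/-- The girth `U(G,S)` of the Cayley graph of `G` with respect to `S`: the infimum in `ℕ∞`
of the lengths of nonempty reduced words in the letters `S ∪ S⁻¹` representing `1`. -/
noncomputable def girthWith {G : Type*} [Group G] (S : Set G) : ℕ∞ :=
  ⨅ w ∈ {w : List G | IsRelatorWord S w}, (w.length : ℕ∞)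

/-- The girth `U(G)` of a group `G`: the supremum of `U(G,S)` over all finite
generating sets `S` of `G`. -/
noncomputable def groupGirth (G : Type*) [Group G] : ℕ∞ :=
  ⨆ S ∈ {S : Finset G | Subgroup.closure (S : Set G) = ⊤}, girthWith (S : Set G)

open List

section Words

variable {G : Type*} [Group G]

def IsCyclicallyReduced (w : List G) : Prop :=
  w.IsChain (fun a b => b ≠ a⁻¹) ∧ ∀ a ∈ w.getLast?, ∀ b ∈ w.head?, b ≠ a⁻¹

theorem IsCyclicallyReduced.of_map {Q : Type*} [Group Q] (f : G →* Q) {w : List G}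
    (h : IsCyclicallyReduced (w.map f)) : IsCyclicallyReduced w := by
  have ne_inv_of_map {a b : G} (hab : f b ≠ (f a)⁻¹) : b ≠ a⁻¹ := by
    rintro rfl
    exact hab (map_inv f a)
  obtain ⟨hchain, hwrap⟩ := h
  rw [isChain_map] at hchain
  refine ⟨hchain.imp fun a b => ne_inv_of_map, fun a ha b hb => ne_inv_of_map ?_⟩
  rw [getLast?_map, head?_map] at hwrap
  exact hwrap (f a) (Option.mem_map_of_mem f ha) (f b) (Option.mem_map_of_mem f hb)

theorem IsCyclicallyReduced.isChain_flatten_replicate {w : List G} (h : IsCyclicallyReduced w)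
    (m : ℕ) : (replicate m w).flatten.IsChain (fun a b => b ≠ a⁻¹) := by
  rcases eq_or_ne w [] with rfl | hw
  · simp
  rw [isChain_flatten (by simp [mem_replicate, hw.symm])]
  refine ⟨fun l hl => (eq_of_mem_replicate hl) ▸ h.1, isChain_replicate_of_rel m h.2⟩

theorem girthWith_le_length {S : Set G} {w : List G} (h : IsRelatorWord S w) :
    girthWith S ≤ w.length :=
  iInf₂_le w h

theorem exists_isRelatorWord_length_le_of_girthWith_le {S : Set G} {N : ℕ}
    (h : girthWith S ≤ N) : ∃ w, IsRelatorWord S w ∧ w.length ≤ N := by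
  by_contra! hlong
  have : ((N + 1 : ℕ) : ℕ∞) ≤ N :=
    (le_iInf₂ fun w hw => by exact_mod_cast hlong w hw).trans h
  norm_cast at this
  omega

theorem exists_isRelatorWord_minimal_of_girthWith_le {S : Set G} {N : ℕ}
    (h : girthWith S ≤ N) : ∃ u, IsRelatorWord S u ∧ u.length ≤ N ∧
      ∀ w, IsRelatorWord S w → u.length ≤ w.length := by
  classical
  obtain ⟨v, hv, hvN⟩ := exists_isRelatorWord_length_le_of_girthWith_le h
  have hex : ∃ n, ∃ w, IsRelatorWord S w ∧ w.length = n := ⟨_, v, hv, rfl⟩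
  obtain ⟨u, hu, hlen⟩ := Nat.find_spec hex
  refine ⟨u, hu, ?_, fun w hw => hlen ▸ Nat.find_min' hex ⟨w, hw, rfl⟩⟩
  exact hlen ▸ (Nat.find_min' hex ⟨v, hv, rfl⟩).trans hvN

theorem IsRelatorWord.isCyclicallyReduced_of_minimal {S : Set G} (h1 : (1 : G) ∉ S) {u : List G}
    (hu : IsRelatorWord S u) (hmin : ∀ w, IsRelatorWord S w → u.length ≤ w.length) :
    IsCyclicallyReduced u := by
  obtain ⟨hne, hmem, hchain, hprod⟩ := hu
  obtain ⟨b, l, rfl⟩ := exists_cons_of_ne_nil hne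
  refine ⟨hchain, ?_⟩
  rcases eq_nil_or_concat' l with rfl | ⟨m, a, rfl⟩
  · obtain rfl : b = 1 := by simpa using hprod
    simp_all
  intro a' ha b' hb hba
  rw [← cons_append, getLast?_concat, Option.mem_some_iff] at ha
  rw [head?_cons, Option.mem_some_iff] at hb
  subst ha hb hba
  change List.IsChain _ _ at hchain
  have hm : IsRelatorWord S m := by
    refine ⟨?_, fun g hg => hmem g (by simp [hg]), hchain.tail.left_of_append, ?_⟩
    · rintro rfl
      simp at hchain
    · simpa [mul_assoc, inv_mul_eq_one] using hprod
  simpa using hmin m hm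

theorem girthWith_le_mul_length_of_pow_eq_one {S : Set G} {w : List G} (hw : w ≠ [])
    (hS : ∀ g ∈ w, g ∈ S ∨ g⁻¹ ∈ S) (hcyc : IsCyclicallyReduced w) {m : ℕ} (hm : m ≠ 0)
    (hpow : w.prod ^ m = 1) : girthWith S ≤ (m * w.length : ℕ) := by
  have hrel : IsRelatorWord S (replicate m w).flatten := by
    refine ⟨by simp [hm, hw], ?_, hcyc.isChain_flatten_replicate m, ?_⟩
    · simp only [mem_flatten, mem_replicate]
      rintro g ⟨_, ⟨-, rfl⟩, hg⟩
      exact hS g hg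
    · rw [prod_flatten, map_replicate, prod_replicate, hpow]
  simpa using girthWith_le_length hrel

theorem girthWith_le_groupGirth (S : Finset G) (hS : Subgroup.closure (S : Set G) = ⊤) :
    girthWith (S : Set G) ≤ groupGirth G :=
  le_iSup₂ (f := fun (S : Finset G) _ => girthWith (S : Set G)) S hS

end Words

theorem List.exists_map_eq_of_forall_mem {α β : Type*} {f : α → β} {p : α → Prop} {u : List β}
    (h : ∀ b ∈ u, ∃ a, p a ∧ f a = b) : ∃ w : List α, (∀ a ∈ w, p a) ∧ w.map f = u := by
  induction u with
  | nil => exact ⟨[], by simp⟩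
  | cons b u ih =>
    obtain ⟨a, ha, rfl⟩ := h b mem_cons_self
    obtain ⟨w, hw, rfl⟩ := ih fun b hb => h b (mem_cons_of_mem _ hb)
    exact ⟨a :: w, by simp_all⟩

theorem exists_map_eq_of_forall_mem_image {G Q : Type*} [Group G] [Group Q] (f : G →* Q)
    {S : Set G} {u : List Q} (h : ∀ q ∈ u, q ∈ f '' S ∨ q⁻¹ ∈ f '' S) :
    ∃ w : List G, (∀ g ∈ w, g ∈ S ∨ g⁻¹ ∈ S) ∧ w.map f = u := by
  refine exists_map_eq_of_forall_mem fun q hq => ?_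
  rcases h q hq with ⟨g, hg, rfl⟩ | ⟨g, hg, hgq⟩
  · exact ⟨g, Or.inl hg, rfl⟩
  · exact ⟨g⁻¹, Or.inr (by simpa using hg), by simp [hgq]⟩

theorem girthWith_le_card_ker_mul {G Q : Type*} [Group G] [Group Q] {f : G →* Q}
    (hf : Function.Surjective f) [Finite f.ker] {N : ℕ} (hN : groupGirth Q ≤ N) (S : Finset G)
    (hS : Subgroup.closure (S : Set G) = ⊤) :
    girthWith (S : Set G) ≤ (Nat.card f.ker * N : ℕ) := by
  classical
  -- Without erasing `1`, the minimal relator could be `[1]`, which is not cyclically reduced.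
  set T := (S.image f).erase 1
  have hT : Subgroup.closure (T : Set Q) = ⊤ := by
    rw [Finset.coe_erase, Finset.coe_image, Subgroup.closure_sdiff_one, ← MonoidHom.map_closure,
      hS, Subgroup.map_top_of_surjective f hf]
  obtain ⟨u, hu, hlen, hmin⟩ :=
    exists_isRelatorWord_minimal_of_girthWith_le ((girthWith_le_groupGirth T hT).trans hN)
  have hcyc := hu.isCyclicallyReduced_of_minimal (by simp [T]) hmin
  obtain ⟨hne, hmem, -, hprod⟩ := hu
  have hTS : (T : Set Q) ⊆ f '' S := by simp [T]
  obtain ⟨w, hwS, rfl⟩ := exists_map_eq_of_forall_mem_image f fun q hq =>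
    (hmem q hq).imp (@hTS q) (@hTS q⁻¹)
  have hker : w.prod ∈ f.ker := by rwa [MonoidHom.mem_ker, map_list_prod]
  have hpow : w.prod ^ Nat.card f.ker = 1 :=
    congrArg Subtype.val (pow_card_eq_one' (x := (⟨_, hker⟩ : f.ker)))
  refine (girthWith_le_mul_length_of_pow_eq_one (by simpa using hne) hwS (hcyc.of_map f)
    Nat.card_pos.ne' hpow).trans ?_
  exact_mod_cast Nat.mul_le_mul_left _ (by simpa using hlen)

theorem finite_girth_of_finite_kernel_surjection_general {G Q : Type*} [Group G]
    [Group Q] (f : G →* Q) (hsurj : Function.Surjective f)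
    (hker : Finite f.ker) (hQ : groupGirth Q < ⊤) :
    groupGirth G < ⊤ := by
  lift groupGirth Q to ℕ using hQ.ne with N hN
  exact (iSup₂_le fun S hS => girthWith_le_card_ker_mul hsurj hN.ge S hS).trans_lt
    (ENat.natCast_lt_top _)

/-- A finitely generated group admitting a finite-kernel surjection onto a finitely
generated group with finite girth has finite girth. -/
theorem finite_girth_of_finite_kernel_surjection {G Q : Type*} [Group G] [Group.FG G]
    [Group Q] [Group.FG Q] (f : G →* Q) (hsurj : Function.Surjective f)
    (hker : Finite f.ker) (hQ : groupGirth Q < ⊤) :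
    groupGirth G < ⊤ :=
  finite_girth_of_finite_kernel_surjection_general f hsurj hker hQ
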